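/- Let A = B(V)#K[Γ] for V a quantum plane with χ_1χ_2 = ε and q = χ_1(g_1). If γ is an H-bilinear H-balanced 2-cocycle on A and q^{i+k} ≠ q^{j+l}, then γ(x_1^i x_2^j ⊗ x_1^k x_2^l) = 0, and likewise γ^{-1}(x_1^i x_2^j ⊗ x_1^k x_2^l) = 0. -/

import Mathlib

/-!
Conjugation by the group-like element `g = grp g₁` rescales `x₁^i x₂^j` by
`q^i χ₂(g₁)^j = q^(i-j)`, because `χ₂(g₁) = q⁻¹`. Moving `g` with H-bilinearity and
H-balancedness from the left of the first argument of `γ` to the right of the second gives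
`γ(a ⊗ b) = q^(i+k-j-l) γ(a ⊗ b)`, so `γ(a ⊗ b) = 0` unless `q^(i+k) = q^(j+l)`.
The convolution inverse `γ'` is again H-bilinear and H-balanced: `a ⊗ b ↦ ga ⊗ bg'`,
`a ⊗ b ↦ ag ⊗ b` and `a ⊗ b ↦ a ⊗ gb` are coalgebra endomorphisms of `A ⊗ A`, and
precomposing with a coalgebra map preserves convolution inverses.
-/
open TensorProduct Coalgebra

set_option autoImplicit false
universe u
variable {K A : Type u} [Field K] [CharZero K] [Ring A] [Bialgebra K A]

/-- Convolution product of two `K`-valued linear maps on a coalgebra. -/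
noncomputable def conv {C : Type u} [AddCommGroup C] [Module K C] [Coalgebra K C]
    (f g : C →ₗ[K] K) : C →ₗ[K] K :=
  (LinearMap.mul' K K) ∘ₗ (TensorProduct.map f g) ∘ₗ Coalgebra.comul

/-- Convolution product of two `A`-valued linear maps on the coalgebra `A ⊗ A`. -/
noncomputable def convMap (f g : A ⊗[K] A →ₗ[K] A) : A ⊗[K] A →ₗ[K] A :=
  (LinearMap.mul' K A) ∘ₗ (TensorProduct.map f g) ∘ₗ Coalgebra.comul

/-- `x ⊗ y ⊗ z ↦ γ(y₍₁₎ ⊗ z₍₁₎) γ(x ⊗ y₍₂₎z₍₂₎)`: the left side of the 2-cocycle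
identity, for the multiplication `m`. -/
noncomputable def cocycleL (m : A ⊗[K] A →ₗ[K] A) (γ : A ⊗[K] A →ₗ[K] K) :
    A ⊗[K] (A ⊗[K] A) →ₗ[K] K :=
  conv ((LinearMap.mul' K K) ∘ₗ TensorProduct.map Coalgebra.counit γ)
    (γ ∘ₗ TensorProduct.map LinearMap.id m)

/-- `x ⊗ y ⊗ z ↦ γ(x₍₁₎ ⊗ y₍₁₎) γ(x₍₂₎y₍₂₎ ⊗ z)`: the right side of the 2-cocycle
identity, for the multiplication `m`. -/
noncomputable def cocycleR (m : A ⊗[K] A →ₗ[K] A) (γ : A ⊗[K] A →ₗ[K] K) :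
    A ⊗[K] (A ⊗[K] A) →ₗ[K] K :=
  conv ((LinearMap.mul' K K) ∘ₗ TensorProduct.map γ Coalgebra.counit
      ∘ₗ (TensorProduct.assoc K A A A).symm.toLinearMap)
    (γ ∘ₗ TensorProduct.map m LinearMap.id ∘ₗ (TensorProduct.assoc K A A A).symm.toLinearMap)

/-- A normalized (unital) 2-cocycle with respect to a multiplication `m` on `A`. -/
noncomputable def IsNormalizedCocycleWith (m : A ⊗[K] A →ₗ[K] A)
    (γ : A ⊗[K] A →ₗ[K] K) : Prop :=
  cocycleL m γ = cocycleR m γ ∧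
    (∀ a : A, γ (a ⊗ₜ[K] 1) = Coalgebra.counit a ∧ γ ((1 : A) ⊗ₜ[K] a) = Coalgebra.counit a)

/-- Convolution invertibility of a `K`-valued map on `A ⊗ A`. -/
noncomputable def IsConvInvertible (γ : A ⊗[K] A →ₗ[K] K) : Prop :=
  ∃ γ' : A ⊗[K] A →ₗ[K] K, conv γ γ' = Coalgebra.counit ∧ conv γ' γ = Coalgebra.counit

/-- The twisted multiplication `γ ∗ m ∗ γ'` (where `γ'` is the convolution inverse
of `γ`). -/
noncomputable def mulTwist (m : A ⊗[K] A →ₗ[K] A) (γ γ' : A ⊗[K] A →ₗ[K] K) :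
    A ⊗[K] A →ₗ[K] A :=
  convMap (convMap ((Algebra.linearMap K A) ∘ₗ γ) m) ((Algebra.linearMap K A) ∘ₗ γ')

section Convolution

variable {R C D : Type u} [Field R] [AddCommGroup C] [Module R C] [Coalgebra R C]
  [AddCommGroup D] [Module R D] [Coalgebra R D]

lemma conv_comp_coalgHom (f g : C →ₗ[R] R) (φ : D →ₗc[R] C) :
    conv (f ∘ₗ φ.toLinearMap) (g ∘ₗ φ.toLinearMap) = conv f g ∘ₗ φ.toLinearMap :=
  (LinearMap.convMul_comp_coalgHom_distrib (WithConv.toConv f) (WithConv.toConv g) φ).symm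

lemma conv_comp_coalgHom_eq_counit {f g : C →ₗ[R] R} (h : conv f g = counit) (φ : D →ₗc[R] C) :
    WithConv.toConv (f ∘ₗ φ.toLinearMap) * WithConv.toConv (g ∘ₗ φ.toLinearMap) = 1 := by
  apply WithConv.ofConv_injective
  change conv (f ∘ₗ φ.toLinearMap) (g ∘ₗ φ.toLinearMap) = counit
  rw [conv_comp_coalgHom, h, φ.counit_comp]

lemma comp_coalgHom_eq_of_conv_eq_counit {γ γ' : C →ₗ[R] R}
    (hr : conv γ γ' = counit) (hl : conv γ' γ = counit) {φ ψ : D →ₗc[R] C}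
    (h : γ ∘ₗ φ.toLinearMap = γ ∘ₗ ψ.toLinearMap) :
    γ' ∘ₗ φ.toLinearMap = γ' ∘ₗ ψ.toLinearMap := by
  have hψ := conv_comp_coalgHom_eq_counit hr ψ
  rw [← h] at hψ
  exact congrArg WithConv.ofConv (left_inv_eq_right_inv (conv_comp_coalgHom_eq_counit hl φ) hψ)

end Convolution

namespace IsGroupLikeElem

variable {R B : Type*} [CommSemiring R] [Semiring B] [Bialgebra R B] {g : B}

noncomputable def mulLeftCoalgHom (hg : IsGroupLikeElem R g) : B →ₗc[R] B where
  __ := LinearMap.mulLeft R g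
  counit_comp := by ext x; simp [Bialgebra.counit_mul, hg.counit_eq_one]
  map_comp_comul := by
    ext x
    simp [Bialgebra.comul_mul, hg.comul_eq_tmul_self, ← LinearMap.mulLeft_tmul]

noncomputable def mulRightCoalgHom (hg : IsGroupLikeElem R g) : B →ₗc[R] B where
  __ := LinearMap.mulRight R g
  counit_comp := by ext x; simp [Bialgebra.counit_mul, hg.counit_eq_one]
  map_comp_comul := by
    ext x
    simp [Bialgebra.comul_mul, hg.comul_eq_tmul_self, ← LinearMap.mulRight_tmul]

end IsGroupLikeElem

section SkewCommute

variable {R B : Type*} [CommSemiring R] [Semiring B] [Algebra R B] {g x y : B} {c d : R}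

lemma mul_mul_eq_smul_of_mul_eq_smul (hx : g * x = c • (x * g)) (hy : g * y = d • (y * g)) :
    g * (x * y) = (c * d) • (x * y * g) := by
  rw [← mul_assoc, hx, smul_mul_assoc, mul_assoc, hy, mul_smul_comm, smul_smul, mul_assoc]

lemma mul_pow_eq_smul_of_mul_eq_smul (hx : g * x = c • (x * g)) (n : ℕ) :
    g * x ^ n = c ^ n • (x ^ n * g) := by
  induction n with
  | zero => simp
  | succ n ih => rw [pow_succ, pow_succ, mul_mul_eq_smul_of_mul_eq_smul ih hx]

end SkewCommute

lemma pow_mul_pow_ne_one_of_mul_eq_one {M : Type*} [CommMonoid M] {q p : M} (hqp : q * p = 1)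
    {m n : ℕ} (h : q ^ m ≠ q ^ n) : q ^ m * p ^ n ≠ 1 := by
  intro h1
  apply h
  calc q ^ m = q ^ m * (q * p) ^ n := by rw [hqp, one_pow, mul_one]
    _ = q ^ m * p ^ n * q ^ n := by rw [mul_pow, mul_comm (q ^ n), mul_assoc]
    _ = q ^ n := by rw [h1, one_mul]

/-- Moving `g` once around `a ⊗ b` multiplies `δ (a ⊗ b)` by `c * d`. -/
lemma apply_tmul_eq_zero_of_mul_ne_one {R B : Type*} [Field R] [Ring B] [Algebra R B]
    (δ : B ⊗[R] B →ₗ[R] R) {g a b : B} {c d : R}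
    (hleft : δ ((g * a) ⊗ₜ b) = δ (a ⊗ₜ b)) (hright : δ (a ⊗ₜ (b * g)) = δ (a ⊗ₜ b))
    (hbal : δ ((a * g) ⊗ₜ b) = δ (a ⊗ₜ (g * b)))
    (ha : g * a = c • (a * g)) (hb : g * b = d • (b * g)) (hcd : c * d ≠ 1) :
    δ (a ⊗ₜ b) = 0 := by
  have h : δ (a ⊗ₜ b) = c * d * δ (a ⊗ₜ b) := calc
    δ (a ⊗ₜ b) = δ ((g * a) ⊗ₜ b) := hleft.symm
    _ = c * δ (a ⊗ₜ (g * b)) := by rw [ha, ← smul_tmul', map_smul, smul_eq_mul, hbal]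
    _ = c * (d * δ (a ⊗ₜ (b * g))) := by rw [hb, tmul_smul, map_smul, smul_eq_mul]
    _ = c * d * δ (a ⊗ₜ b) := by rw [hright, mul_assoc]
  have h' : (c * d - 1) * δ (a ⊗ₜ b) = 0 := by linear_combination -h
  exact (mul_eq_zero.1 h').resolve_left (sub_ne_zero.2 hcd)

section ConvInverse

variable {R B : Type u} [Field R] [Ring B] [Bialgebra R B] {γ γ' : B ⊗[R] B →ₗ[R] R}
  {g g' : B}

lemma apply_mul_tmul_mul_eq_of_conv_eq_counit (hr : conv γ γ' = counit) (hl : conv γ' γ = counit)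
    (hg : IsGroupLikeElem R g) (hg' : IsGroupLikeElem R g')
    (hγ : ∀ a b : B, γ ((g * a) ⊗ₜ (b * g')) = γ (a ⊗ₜ b)) (a b : B) :
    γ' ((g * a) ⊗ₜ (b * g')) = γ' (a ⊗ₜ b) :=
  LinearMap.congr_fun (comp_coalgHom_eq_of_conv_eq_counit hr hl
    (φ := Coalgebra.TensorProduct.map hg.mulLeftCoalgHom hg'.mulRightCoalgHom)
    (ψ := CoalgHom.id R _) (TensorProduct.ext' hγ)) (a ⊗ₜ b)

lemma apply_mul_tmul_eq_of_conv_eq_counit (hr : conv γ γ' = counit) (hl : conv γ' γ = counit)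
    (hg : IsGroupLikeElem R g) (hγ : ∀ a b : B, γ ((a * g) ⊗ₜ b) = γ (a ⊗ₜ (g * b)))
    (a b : B) : γ' ((a * g) ⊗ₜ b) = γ' (a ⊗ₜ (g * b)) :=
  LinearMap.congr_fun (comp_coalgHom_eq_of_conv_eq_counit hr hl
    (φ := Coalgebra.TensorProduct.map hg.mulRightCoalgHom (CoalgHom.id R B))
    (ψ := Coalgebra.TensorProduct.map (CoalgHom.id R B) hg.mulLeftCoalgHom)
    (TensorProduct.ext' hγ)) (a ⊗ₜ b)

end ConvInverse

theorem stmt9_general {Γ : Type u} [CommGroup Γ] (grp : Γ →* A)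
    (hgrp : ∀ u : Γ, Coalgebra.comul (R := K) (grp u) = grp u ⊗ₜ[K] grp u ∧
      Coalgebra.counit (R := K) (grp u) = 1)
    (x₁ x₂ : A) (g₁ : Γ) (χ₁ χ₂ : Γ →* K)
    (hcomm₁ : ∀ u : Γ, grp u * x₁ = χ₁ u • (x₁ * grp u))
    (hcomm₂ : ∀ u : Γ, grp u * x₂ = χ₂ u • (x₂ * grp u))
    (htriv : χ₁ * χ₂ = 1)
    (q : K) (hq : q = χ₁ g₁)
    (γ : A ⊗[K] A →ₗ[K] K)
    (hbil : ∀ (u u' : Γ) (a b : A), γ ((grp u * a) ⊗ₜ[K] (b * grp u')) = γ (a ⊗ₜ[K] b))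
    (hbal : ∀ (u : Γ) (a b : A), γ ((a * grp u) ⊗ₜ[K] b) = γ (a ⊗ₜ[K] (grp u * b))) :
    ∀ i j k l : ℕ, q ^ (i + k) ≠ q ^ (j + l) →
      γ ((x₁ ^ i * x₂ ^ j) ⊗ₜ[K] (x₁ ^ k * x₂ ^ l)) = 0 ∧
      (∀ γ' : A ⊗[K] A →ₗ[K] K,
        conv γ γ' = Coalgebra.counit → conv γ' γ = Coalgebra.counit →
          γ' ((x₁ ^ i * x₂ ^ j) ⊗ₜ[K] (x₁ ^ k * x₂ ^ l)) = 0) := by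
  intro i j k l hne
  have hg (u : Γ) : IsGroupLikeElem K (grp u) := ⟨(hgrp u).2, (hgrp u).1⟩
  have hqχ : q * χ₂ g₁ = 1 := by rw [hq, ← MonoidHom.mul_apply, htriv, MonoidHom.one_apply]
  have hskew (m n : ℕ) :
      grp g₁ * (x₁ ^ m * x₂ ^ n) = (q ^ m * χ₂ g₁ ^ n) • (x₁ ^ m * x₂ ^ n * grp g₁) :=
    hq ▸ mul_mul_eq_smul_of_mul_eq_smul (mul_pow_eq_smul_of_mul_eq_smul (hcomm₁ g₁) m)
      (mul_pow_eq_smul_of_mul_eq_smul (hcomm₂ g₁) n)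
  have hdeg : q ^ i * χ₂ g₁ ^ j * (q ^ k * χ₂ g₁ ^ l) ≠ 1 := by
    rw [mul_mul_mul_comm, ← pow_add, ← pow_add]
    exact pow_mul_pow_ne_one_of_mul_eq_one hqχ hne
  have vanish (δ : A ⊗[K] A →ₗ[K] K)
      (hδbil : ∀ (u u' : Γ) (a b : A), δ ((grp u * a) ⊗ₜ[K] (b * grp u')) = δ (a ⊗ₜ[K] b))
      (hδbal : ∀ (u : Γ) (a b : A), δ ((a * grp u) ⊗ₜ[K] b) = δ (a ⊗ₜ[K] (grp u * b))) :
      δ ((x₁ ^ i * x₂ ^ j) ⊗ₜ[K] (x₁ ^ k * x₂ ^ l)) = 0 :=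
    apply_tmul_eq_zero_of_mul_ne_one δ (by simpa using hδbil g₁ 1 _ _)
      (by simpa using hδbil 1 g₁ _ _) (hδbal g₁ _ _) (hskew i j) (hskew k l) hdeg
  refine ⟨vanish γ hbil hbal, fun γ' hr hl => vanish γ' ?_ ?_⟩
  · exact fun u u' => apply_mul_tmul_mul_eq_of_conv_eq_counit hr hl (hg u) (hg u') (hbil u u')
  · exact fun u => apply_mul_tmul_eq_of_conv_eq_counit hr hl (hg u) (hbal u)

/-- Let `A = B(V)#K[Γ]` for `V` a quantum plane with `χ₁χ₂ = ε` and
`q = χ₁(g₁)`.  If `γ` is an `H`-bilinear, `H`-balanced normalized 2-cocycle on `A` and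
`q^{i+k} ≠ q^{j+l}`, then `γ(x₁^i x₂^j ⊗ x₁^k x₂^l) = 0`, and likewise
`γ⁻¹(x₁^i x₂^j ⊗ x₁^k x₂^l) = 0`. -/
theorem stmt9 {Γ : Type u} [CommGroup Γ] [Fintype Γ] (grp : Γ →* A)
    (hgrp : ∀ u : Γ, Coalgebra.comul (R := K) (grp u) = grp u ⊗ₜ[K] grp u ∧
      Coalgebra.counit (R := K) (grp u) = 1)
    (x₁ x₂ : A) (g₁ g₂ : Γ) (χ₁ χ₂ : Γ →* K) (r : ℕ)
    (hx₁prim : Coalgebra.comul (R := K) x₁ = x₁ ⊗ₜ[K] (1 : A) + grp g₁ ⊗ₜ[K] x₁)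
    (hx₂prim : Coalgebra.comul (R := K) x₂ = x₂ ⊗ₜ[K] (1 : A) + grp g₂ ⊗ₜ[K] x₂)
    (hcnt₁ : Coalgebra.counit (R := K) x₁ = 0)
    (hcnt₂ : Coalgebra.counit (R := K) x₂ = 0)
    (hcomm₁ : ∀ u : Γ, grp u * x₁ = χ₁ u • (x₁ * grp u))
    (hcomm₂ : ∀ u : Γ, grp u * x₂ = χ₂ u • (x₂ * grp u))
    (hcompat : χ₁ g₂ * χ₂ g₁ = 1)
    (htriv : χ₁ * χ₂ = 1)
    (q : K) (hq : q = χ₁ g₁) (hprim : IsPrimitiveRoot q r)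
    (hbraid : x₁ * x₂ = χ₂ g₁ • (x₂ * x₁))
    (hnil₁ : x₁ ^ r = 0) (hnil₂ : x₂ ^ r = 0)
    (γ : A ⊗[K] A →ₗ[K] K)
    (hcoc : IsNormalizedCocycleWith (LinearMap.mul' K A) γ)
    (hbil : ∀ (u u' : Γ) (a b : A), γ ((grp u * a) ⊗ₜ[K] (b * grp u')) = γ (a ⊗ₜ[K] b))
    (hbal : ∀ (u : Γ) (a b : A), γ ((a * grp u) ⊗ₜ[K] b) = γ (a ⊗ₜ[K] (grp u * b))) :
    ∀ i j k l : ℕ, q ^ (i + k) ≠ q ^ (j + l) →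
      γ ((x₁ ^ i * x₂ ^ j) ⊗ₜ[K] (x₁ ^ k * x₂ ^ l)) = 0 ∧
      (∀ γ' : A ⊗[K] A →ₗ[K] K,
        conv γ γ' = Coalgebra.counit → conv γ' γ = Coalgebra.counit →
          γ' ((x₁ ^ i * x₂ ^ j) ⊗ₜ[K] (x₁ ^ k * x₂ ^ l)) = 0) :=
  stmt9_general grp hgrp x₁ x₂ g₁ χ₁ χ₂ hcomm₁ hcomm₂ htriv q hq γ hbil hbal
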